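/- The logic IL extended with the principle P0 (A ▷ ◇B → □(A▷B)) does not derive the principle M0 (A▷B → (◇A ∧ □C) ▷ (B ∧ □C)). -/
import Mathlib


/-- Modal formulas of interpretability logic: atoms, ⊥, →, □, ▷. -/
inductive Fm : Type
  | atom : ℕ → Fm
  | bot : Fm
  | imp : Fm → Fm → Fm
  | box : Fm → Fm
  | rhd : Fm → Fm → Fm
deriving DecidableEq

namespace Fm
def neg (A : Fm) : Fm := .imp A .bot
def conj (A B : Fm) : Fm := neg (.imp A (neg B))
def disj (A B : Fm) : Fm := .imp (neg A) B
def dia (A : Fm) : Fm := neg (.box (neg A))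
end Fm

/-- `f` is a boolean propositional evaluation (treats □ and ▷ formulas as atoms). -/
def PropEval (f : Fm → Bool) : Prop :=
  f Fm.bot = false ∧ ∀ A B, f (Fm.imp A B) = (!(f A) || f B)

/-- Propositional tautology. -/
def Taut (A : Fm) : Prop := ∀ f, PropEval f → f A = true

/-- Derivability in the interpretability logic IL extended with extra axioms `X`. -/
inductive Prov (X : Fm → Prop) : Fm → Prop
  | taut {A} : Taut A → Prov X A
  | extra {A} : X A → Prov X A
  | l1 (A B) : Prov X (.imp (.box (.imp A B)) (.imp (.box A) (.box B)))
  | l2 (A) : Prov X (.imp (.box A) (.box (.box A)))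
  | l3 (A) : Prov X (.imp (.box (.imp (.box A) A)) (.box A))
  | j1 (A B) : Prov X (.imp (.box (.imp A B)) (.rhd A B))
  | j2 (A B C) : Prov X (.imp (Fm.conj (.rhd A B) (.rhd B C)) (.rhd A C))
  | j3 (A B C) : Prov X (.imp (Fm.conj (.rhd A C) (.rhd B C)) (.rhd (Fm.disj A B) C))
  | j4 (A B) : Prov X (.imp (.rhd A B) (.imp (Fm.dia A) (Fm.dia B)))
  | j5 (A) : Prov X (.rhd (Fm.dia A) A)
  | mp {A B} : Prov X (.imp A B) → Prov X A → Prov X B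
  | nec {A} : Prov X A → Prov X (.box A)

/-- Derivability in plain IL. -/
def ILProv : Fm → Prop := Prov (fun _ => False)

/-- A Veltman frame (IL-frame). -/
structure VFrame where
  W : Type
  ne : Nonempty W
  R : W → W → Prop
  /-- `S x y z` means `y S_x z`. -/
  S : W → W → W → Prop
  R_trans : ∀ {x y z}, R x y → R y z → R x z
  R_cwf : WellFounded (fun x y => R y x)
  S_R : ∀ {x y z}, S x y z → R x y ∧ R x z
  S_refl : ∀ {x y}, R x y → S x y y
  R_S : ∀ {x y z}, R x y → R y z → S x y z
  S_trans : ∀ {x u v w}, S x u v → S x v w → S x u w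

structure VModel extends VFrame where
  val : W → ℕ → Prop

/-- Satisfaction on Veltman models. -/
def VSat (M : VModel) : M.W → Fm → Prop
  | w, .atom n => M.val w n
  | _, .bot => False
  | w, .imp A B => VSat M w A → VSat M w B
  | w, .box A => ∀ v, M.R w v → VSat M v A
  | w, .rhd A B => ∀ u, M.R w u → VSat M u A → ∃ v, M.S w u v ∧ VSat M v B

/-- Validity on a Veltman frame. -/
def VFrame.Valid (F : VFrame) (A : Fm) : Prop :=
  ∀ val : F.W → ℕ → Prop, ∀ w : F.W, VSat { toVFrame := F, val := val } w A

/-- A generalized Veltman frame (ILset-frame). -/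
structure GFrame where
  W : Type
  ne : Nonempty W
  R : W → W → Prop
  /-- `S w x Y` means `x S_w Y`. -/
  S : W → W → Set W → Prop
  R_trans : ∀ {x y z}, R x y → R y z → R x z
  R_cwf : WellFounded (fun x y => R y x)
  S_ne : ∀ {w x Y}, S w x Y → Y.Nonempty
  S_R : ∀ {w x Y}, S w x Y → R w x ∧ ∀ y ∈ Y, R w y
  S_refl : ∀ {w x}, R w x → S w x {x}
  S_qtrans : ∀ {w x Y}, S w x Y → ∀ y ∈ Y, ∀ Z, y ∉ Z → S w y Z → S w x Z
  R_S : ∀ {w x y}, R w x → R x y → S w x {y}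

structure GModel extends GFrame where
  val : W → ℕ → Prop

/-- Satisfaction on generalized Veltman models. -/
def GSat (M : GModel) : M.W → Fm → Prop
  | w, .atom n => M.val w n
  | _, .bot => False
  | w, .imp A B => GSat M w A → GSat M w B
  | w, .box A => ∀ v, M.R w v → GSat M v A
  | w, .rhd A B => ∀ x, M.R w x → GSat M x A →
      ∃ Y, M.S w x Y ∧ ∀ y ∈ Y, GSat M y B

/-- Validity on a generalized Veltman frame. -/
def GFrame.Valid (F : GFrame) (A : Fm) : Prop :=
  ∀ val : F.W → ℕ → Prop, ∀ w : F.W, GSat { toGFrame := F, val := val } w A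

/-- Instances of the principle M0. -/
def m0fm (A B C : Fm) : Fm :=
  .imp (.rhd A B) (.rhd (Fm.conj (Fm.dia A) (.box C)) (Fm.conj B (.box C)))

/-- Instances of the principle P0. -/
def p0fm (A B : Fm) : Fm := .imp (.rhd A (Fm.dia B)) (.box (.rhd A B))

/-- Instances of the principle R. -/
def rfm (A B C : Fm) : Fm :=
  .imp (.rhd A B) (.rhd (Fm.neg (.rhd A (Fm.neg C))) (Fm.conj B (.box C)))

/-- Instances of the principle W. -/
def wfm (A B : Fm) : Fm :=
  .imp (.rhd A B) (.rhd A (Fm.conj B (.box (Fm.neg A))))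

/-- Instances of the principle W*. -/
def wstarfm (A B C : Fm) : Fm :=
  .imp (.rhd A B)
    (.rhd (Fm.conj B (.box C)) (Fm.conj (Fm.conj B (.box C)) (.box (Fm.neg A))))

/-- Instances of the principle R*. -/
def rstarfm (A B C : Fm) : Fm :=
  .imp (.rhd A B)
    (.rhd (Fm.neg (.rhd A (Fm.neg C))) (Fm.conj (Fm.conj B (.box C)) (.box (Fm.neg A))))

/-- The frame condition for M0 on generalized Veltman frames. -/
def GFrame.M0Cond (F : GFrame) : Prop :=
  ∀ w x y Y, F.R w x → F.R x y → F.S w y Y →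
    ∃ Y', Y' ⊆ Y ∧ F.S w x Y' ∧ ∀ y' ∈ Y', ∀ z, F.R y' z → F.R x z

/-- The frame condition for P0 on generalized Veltman frames. -/
def GFrame.P0Cond (F : GFrame) : Prop :=
  ∀ w x y Y Z, F.R w x → F.R x y → F.S w y Y →
    (∀ y' ∈ Y, ∃ z ∈ Z, F.R y' z) → ∃ Z', Z' ⊆ Z ∧ F.S x y Z'

/-- `Γ` is a choice set for `(w,x)`. -/
def GFrame.ChoiceSet (F : GFrame) (w x : F.W) (Γ : Set F.W) : Prop :=
  ∀ X, F.S w x X → (X ∩ Γ).Nonempty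

/-- The frame condition for R on generalized Veltman frames. -/
def GFrame.RCond (F : GFrame) : Prop :=
  ∀ w x y Y, F.R w x → F.R x y → F.S w y Y →
    ∀ Γ, F.ChoiceSet x y Γ →
      ∃ Y', Y' ⊆ Y ∧ F.S w x Y' ∧ ∀ y' ∈ Y', ∀ z, F.R y' z → z ∈ Γ

/-- The axiom set consisting of all instances of P0. -/
def P0Ax : Fm → Prop := fun F => ∃ A B, F = p0fm A B

section Soundness

variable (M : GModel)

lemma gsat_neg (w : M.W) (A : Fm) : GSat M w (Fm.neg A) ↔ ¬ GSat M w A := by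
  simp [Fm.neg, GSat]

lemma gsat_conj (w : M.W) (A B : Fm) :
    GSat M w (Fm.conj A B) ↔ GSat M w A ∧ GSat M w B := by
  simp [Fm.conj, Fm.neg, GSat]

lemma gsat_disj (w : M.W) (A B : Fm) :
    GSat M w (Fm.disj A B) ↔ GSat M w A ∨ GSat M w B := by
  simp [Fm.disj, Fm.neg, GSat]; tauto

lemma gsat_dia (w : M.W) (A : Fm) :
    GSat M w (Fm.dia A) ↔ ∃ v, M.R w v ∧ GSat M v A := by
  simp [Fm.dia, Fm.neg, GSat]

end Soundness

theorem soundP0 (F : GFrame) (hP : F.P0Cond) :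
    ∀ {A : Fm}, Prov P0Ax A → F.Valid A := by
  intro A h
  induction h with
  | @taut A ht =>
    intro val w
    classical
    set M : GModel := { toGFrame := F, val := val } with hM
    let f : Fm → Bool := fun B => decide (GSat M w B)
    have h1 : f Fm.bot = false := by
      simp only [f, decide_eq_false_iff_not]
      simp [GSat]
    have h2 : ∀ A B, f (Fm.imp A B) = (!(f A) || f B) := by
      intro A B
      by_cases hA : GSat M w A <;> by_cases hB : GSat M w B <;>
        simp [f, GSat, hA, hB]
    exact of_decide_eq_true (ht f ⟨h1, h2⟩)
  | @extra A hx =>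
    obtain ⟨A, B, rfl⟩ := hx
    intro val w
    set M : GModel := { toGFrame := F, val := val } with hM
    simp only [p0fm, GSat]
    intro h x hwx y hxy hA
    obtain ⟨Y, hSY, hY⟩ := h y (F.R_trans hwx hxy) hA
    have hch : ∀ y' ∈ Y, ∃ z ∈ {z | GSat M z B}, F.R y' z := by
      intro y' hy'
      obtain ⟨v, hv, hvB⟩ := (gsat_dia M y' B).1 (hY y' hy')
      exact ⟨v, hvB, hv⟩
    obtain ⟨Z', hsub, hS⟩ := hP w x y Y {z | GSat M z B} hwx hxy hSY hch
    exact ⟨Z', hS, fun z hz => hsub hz⟩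
  | l1 A B =>
    intro val w
    simp only [GSat]
    intro h1 h2 v hv
    exact h1 v hv (h2 v hv)
  | l2 A =>
    intro val w
    simp only [GSat]
    intro h v hv u hu
    exact h u (F.R_trans hv hu)
  | l3 A =>
    intro val w
    simp only [GSat]
    intro h v
    induction v using F.R_cwf.induction with
    | _ v ih =>
      intro hv
      exact h v hv (fun z hz => ih z hz (F.R_trans hv hz))
  | j1 A B =>
    intro val w
    simp only [GSat]
    intro h x hwx hxA
    exact ⟨{x}, F.S_refl hwx, by simpa using h x hwx hxA⟩
  | j2 A B C =>
    intro val w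
    set M : GModel := { toGFrame := F, val := val } with hM
    intro hcc
    obtain ⟨hAB, hBC⟩ := (gsat_conj M w _ _).1 hcc
    intro x hwx hxA
    obtain ⟨Y, hSY, hYB⟩ := hAB x hwx hxA
    by_cases hall : ∀ y ∈ Y, GSat M y C
    · exact ⟨Y, hSY, hall⟩
    · push_neg at hall
      obtain ⟨y, hyY, hyC⟩ := hall
      obtain ⟨Z, hSZ, hZC⟩ := hBC y ((F.S_R hSY).2 y hyY) (hYB y hyY)
      exact ⟨Z, F.S_qtrans hSY y hyY Z (fun h => hyC (hZC y h)) hSZ, hZC⟩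
  | j3 A B C =>
    intro val w
    set M : GModel := { toGFrame := F, val := val } with hM
    intro hcc
    obtain ⟨hAC, hBC⟩ := (gsat_conj M w _ _).1 hcc
    intro x hwx hxAB
    rcases (gsat_disj M x A B).1 hxAB with hA | hB
    · exact hAC x hwx hA
    · exact hBC x hwx hB
  | j4 A B =>
    intro val w
    set M : GModel := { toGFrame := F, val := val } with hM
    intro h hdA
    obtain ⟨x, hx, hxA⟩ := (gsat_dia M w A).1 hdA
    obtain ⟨Y, hS, hYB⟩ := h x hx hxA
    obtain ⟨y, hy⟩ := F.S_ne hS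
    exact (gsat_dia M w B).2 ⟨y, (F.S_R hS).2 y hy, hYB y hy⟩
  | j5 A =>
    intro val w
    set M : GModel := { toGFrame := F, val := val } with hM
    intro x hwx hxd
    obtain ⟨u, hu, huA⟩ := (gsat_dia M x A).1 hxd
    exact ⟨{u}, F.R_S hwx hu, by simpa using huA⟩
  | mp h1 h2 ih1 ih2 =>
    intro val w
    exact ih1 val w (ih2 val w)
  | nec h ih =>
    intro val w
    intro v hv
    exact ih val v

/-- Accessibility of the counterexample frame. -/
def rr : Fin 6 → Fin 6 → Prop := fun a b =>
  (a = 0 ∧ b ≠ 0) ∨ (a = 1 ∧ b = 2) ∨ (a = 3 ∧ b = 5)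

/-- The S relation of the counterexample frame. -/
def SS : Fin 6 → Fin 6 → Set (Fin 6) → Prop := fun w x Y =>
  (w = 0 ∧ x = 1 ∧ (Y = {1} ∨ Y = {2} ∨ Y = {3, 4} ∨ Y = {5})) ∨
  (w = 0 ∧ x = 2 ∧ (Y = {2} ∨ Y = {3, 4} ∨ Y = {5})) ∨
  (w = 0 ∧ x = 3 ∧ (Y = {3} ∨ Y = {5})) ∨
  (w = 0 ∧ x = 4 ∧ Y = {4}) ∨
  (w = 0 ∧ x = 5 ∧ Y = {5}) ∨
  (w = 1 ∧ x = 2 ∧ Y = {2}) ∨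
  (w = 3 ∧ x = 5 ∧ Y = {5})

lemma rr_lt : ∀ a b : Fin 6, rr a b → a.val < b.val := by
  intro a b h
  fin_cases a <;> fin_cases b <;> simp_all [rr]

/-- The counterexample frame. -/
abbrev F0 : GFrame where
  W := Fin 6
  ne := ⟨0⟩
  R := rr
  S := SS
  R_trans := by
    intro x y z hxy hyz
    fin_cases x <;> fin_cases y <;> fin_cases z <;> simp_all [rr]
  R_cwf := by
    refine Subrelation.wf (r := InvImage (· < ·) (fun v : Fin 6 => 5 - v.val)) ?_
      (InvImage.wf _ Nat.lt_wfRel.wf)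
    intro x y h
    have := rr_lt y x h
    simp only [InvImage]
    omega
  S_ne := by
    intro w x Y h
    rcases h with ⟨_, _, (rfl | rfl | rfl | rfl)⟩ | ⟨_, _, (rfl | rfl | rfl)⟩ |
      ⟨_, _, (rfl | rfl)⟩ | ⟨_, _, rfl⟩ | ⟨_, _, rfl⟩ | ⟨_, _, rfl⟩ | ⟨_, _, rfl⟩ <;>
      simp [Set.Nonempty]
  S_R := by
    intro w x Y h
    rcases h with ⟨rfl, rfl, (rfl | rfl | rfl | rfl)⟩ | ⟨rfl, rfl, (rfl | rfl | rfl)⟩ |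
      ⟨rfl, rfl, (rfl | rfl)⟩ | ⟨rfl, rfl, rfl⟩ | ⟨rfl, rfl, rfl⟩ | ⟨rfl, rfl, rfl⟩ |
      ⟨rfl, rfl, rfl⟩ <;>
      refine ⟨by simp [rr], ?_⟩ <;> intro y hy <;>
      simp only [Set.mem_insert_iff, Set.mem_singleton_iff] at hy <;>
      first
        | (rcases hy with rfl | rfl <;> simp [rr])
        | (subst hy; simp [rr])
  S_refl := by
    intro w x h
    rcases h with ⟨rfl, hx⟩ | ⟨rfl, rfl⟩ | ⟨rfl, rfl⟩
    · fin_cases x <;> simp_all [SS]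
    · simp [SS]
    · simp [SS]
  R_S := by
    intro w x y hwx hxy
    rcases hwx with ⟨rfl, hx⟩ | ⟨rfl, rfl⟩ | ⟨rfl, rfl⟩ <;>
      rcases hxy with ⟨h0, hy⟩ | ⟨h0, rfl⟩ | ⟨h0, rfl⟩ <;> simp_all [SS]
  S_qtrans := by
    intro w x Y hS y hy Z hyZ hS2
    rcases hS with ⟨rfl, rfl, (rfl | rfl | rfl | rfl)⟩ | ⟨rfl, rfl, (rfl | rfl | rfl)⟩ |
      ⟨rfl, rfl, (rfl | rfl)⟩ | ⟨rfl, rfl, rfl⟩ | ⟨rfl, rfl, rfl⟩ | ⟨rfl, rfl, rfl⟩ |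
      ⟨rfl, rfl, rfl⟩ <;>
    simp only [Set.mem_insert_iff, Set.mem_singleton_iff] at hy <;>
    (try rcases hy with rfl | rfl) <;> (try subst hy) <;>
    simp_all [SS] <;>
    rcases hS2 with rfl | rfl | rfl <;> simp_all

/-- P0Cond for the counterexample frame. -/
lemma F0_P0 : F0.P0Cond := by
  intro w x y Y Z hwx hxy hSY hch
  exfalso
  -- every S-set of F0 from a world at R-distance two contains an R-maximal element
  rcases hwx with ⟨rfl, hx⟩ | ⟨rfl, rfl⟩ | ⟨rfl, rfl⟩
  · rcases hxy with ⟨h0, _⟩ | ⟨rfl, rfl⟩ | ⟨rfl, rfl⟩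
    · exact hx h0
    · -- chain 0 R 1 R 2 ; S 0 2 Y
      rcases hSY with ⟨_, h2, _⟩ | ⟨_, _, (rfl | rfl | rfl)⟩ | ⟨_, h2, _⟩ |
        ⟨_, h2, _⟩ | ⟨_, h2, _⟩ | ⟨h2, _, _⟩ | ⟨h2, _, _⟩
      · simp at h2
      · obtain ⟨z, _, hz⟩ := hch 2 (by simp)
        rcases hz with ⟨h, _⟩ | ⟨h, _⟩ | ⟨h, _⟩ <;> simp at h
      · obtain ⟨z, _, hz⟩ := hch 4 (by simp)
        rcases hz with ⟨h, _⟩ | ⟨h, _⟩ | ⟨h, _⟩ <;> simp at h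
      · obtain ⟨z, _, hz⟩ := hch 5 (by simp)
        rcases hz with ⟨h, _⟩ | ⟨h, _⟩ | ⟨h, _⟩ <;> simp at h
      · simp at h2
      · simp at h2
      · simp at h2
      · simp at h2
      · simp at h2
    · -- chain 0 R 3 R 5 ; S 0 5 Y
      rcases hSY with ⟨_, h2, _⟩ | ⟨_, h2, _⟩ | ⟨_, h2, _⟩ |
        ⟨_, h2, _⟩ | ⟨_, _, rfl⟩ | ⟨h2, _, _⟩ | ⟨h2, _, _⟩
      · simp at h2
      · simp at h2
      · simp at h2
      · simp at h2
      · obtain ⟨z, _, hz⟩ := hch 5 (by simp)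
        rcases hz with ⟨h, _⟩ | ⟨h, _⟩ | ⟨h, _⟩ <;> simp at h
      · simp at h2
      · simp at h2
  · rcases hxy with ⟨h, _⟩ | ⟨h, _⟩ | ⟨h, _⟩ <;> simp at h
  · rcases hxy with ⟨h, _⟩ | ⟨h, _⟩ | ⟨h, _⟩ <;> simp at h

/-- The valuation: atom 0 ("A") at 2 ; atom 1 ("B") at 3,4 ; atom 2 ("C") at 2. -/
def myval : Fin 6 → ℕ → Prop := fun w n =>
  (w = 2 ∧ (n = 0 ∨ n = 2)) ∨ ((w = 3 ∨ w = 4) ∧ n = 1)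


/-- The counterexample model. -/
abbrev M0 : GModel := { toGFrame := F0, val := myval }
/-- ILP0 does not derive the principle M0. -/
theorem ilp0_not_derives_m0 : ∃ A B C : Fm, ¬ Prov P0Ax (m0fm A B C) := by
  refine ⟨.atom 0, .atom 1, .atom 2, fun hprov => ?_⟩
  have hs : GSat M0 0 (m0fm (.atom 0) (.atom 1) (.atom 2)) :=
    soundP0 F0 F0_P0 hprov myval (0 : Fin 6)
  simp only [m0fm, GSat] at hs
  -- antecedent: A ▷ B holds at 0
  have hant : ∀ x, M0.R 0 x → GSat M0 x (.atom 0) →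
      ∃ Y, M0.S 0 x Y ∧ ∀ y ∈ Y, GSat M0 y (.atom 1) := by
    intro x hx hxA
    have hx2 : x = 2 := by
      have hv : myval x 0 := hxA
      rcases hv with ⟨rfl, _⟩ | ⟨_, h⟩
      · rfl
      · simp at h
    subst hx2
    refine ⟨{3, 4}, ?_, ?_⟩
    · show SS 0 2 {3, 4}
      simp [SS]
    · intro y hy
      simp only [Set.mem_insert_iff, Set.mem_singleton_iff] at hy
      rcases hy with rfl | rfl
      · exact Or.inr ⟨Or.inl rfl, rfl⟩
      · exact Or.inr ⟨Or.inr rfl, rfl⟩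
  have hR01 : M0.R 0 1 := by
    show rr 0 1
    simp [rr]
  have h1 : GSat M0 1 (Fm.conj (Fm.dia (.atom 0)) (.box (.atom 2))) := by
    rw [gsat_conj]
    constructor
    · refine (gsat_dia M0 1 (.atom 0)).2 ⟨2, ?_, Or.inl ⟨rfl, Or.inl rfl⟩⟩
      show rr 1 2
      simp [rr]
    · intro v hv
      have hv' : rr 1 v := hv
      have hv2 : v = 2 := by
        rcases hv' with ⟨h, _⟩ | ⟨_, rfl⟩ | ⟨h, _⟩ <;> first | rfl | simp at h
      subst hv2
      exact Or.inl ⟨rfl, Or.inr rfl⟩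
  obtain ⟨Y, hSY, hY⟩ := hs hant 1 hR01 h1
  have hSY' : SS 0 1 Y := hSY
  -- each possible Y contains an element failing B ∧ □C
  have bad : ∀ y : Fin 6, y ∈ Y →
      GSat M0 y (Fm.conj (.atom 1) (.box (.atom 2))) →
      (myval y 1 ∧ ∀ v, rr y v → myval v 2) := by
    intro y hy hc
    obtain ⟨h1, h2⟩ := (gsat_conj M0 y _ _).1 hc
    exact ⟨h1, h2⟩
  rcases hSY' with ⟨_, _, (rfl | rfl | rfl | rfl)⟩ | ⟨_, h, _⟩ | ⟨_, h, _⟩ |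
      ⟨_, h, _⟩ | ⟨_, h, _⟩ | ⟨h, _, _⟩ | ⟨h, _, _⟩
  · -- Y = {1} : 1 does not satisfy atom 1
    have h1' := (bad 1 (by simp) (hY 1 (by simp))).1
    rcases h1' with ⟨h, _⟩ | ⟨h, _⟩ <;> simp at h
  · -- Y = {2} : 2 does not satisfy atom 1
    have h1' := (bad 2 (by simp) (hY 2 (by simp))).1
    rcases h1' with ⟨_, h⟩ | ⟨h, _⟩ <;> simp at h
  · -- Y = {3,4} : 3 fails □(atom 2) since 3 R 5 and 5 ⊭ atom 2
    have h5 := (bad 3 (by simp) (hY 3 (by simp))).2 5 (by simp [rr])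
    rcases h5 with ⟨h, _⟩ | ⟨h, _⟩ <;> simp at h
  · -- Y = {5} : 5 does not satisfy atom 1
    have h1' := (bad 5 (by simp) (hY 5 (by simp))).1
    rcases h1' with ⟨h, _⟩ | ⟨h, _⟩ <;> simp at h
  · simp at h
  · simp at h
  · simp at h
  · simp at h
  · simp at h
  · simp at h
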